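/- arXiv:math/9312206 — 5 statements merged into one kernel-verified Lean document; each statement's English description precedes it below -/
import Mathlib

section
/- Let X be a normed space, g : ℕ≥1 → ℝ>0 a nondecreasing function, and c > 0 a constant such that for all n and all x₁,…,x_n ∈ X one has ∑_{i=1}^n ‖x_i‖ ≤ c · (n/g(n)) · sup_{ε_i = ±1} ‖∑_{i=1}^n ε_i x_i‖. Then for every finite sequence x₁,…,x_n ∈ X, the nonincreasing rearrangement (a_k^*) of (‖x_k‖)_{k=1}^n satisfies sup_{1≤k≤n} g(k) · a_k^* ≤ c · sup_{x* ∈ B_{X*}} ∑_{i=1}^n |⟨x*, x_i⟩|. -/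
/-!
Take the `k` largest vectors `x_{σ 0}, …, x_{σ (k-1)}`. Each has norm at least `a_k^*`, so
`k a_k^* ≤ ∑_{i<k} ‖x_{σ i}‖ ≤ c (k / g k) sup_ε ‖∑_{i<k} ε_i x_{σ i}‖` by the hypothesis.
A signed sum is normed by a functional of norm at most one (Hahn–Banach), which bounds it by
the weak ℓ¹ norm `sup_{‖x*‖ ≤ 1} ∑ |x*(x_i)|` of the subfamily, and that is at most the weak
ℓ¹ norm of the whole family. Dividing by `k / g k` gives the claim.
-/

open Finset

section weakL1Norm

variable {X : Type*} [NormedAddCommGroup X] [NormedSpace ℝ X]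

noncomputable def weakL1Norm {ι : Type*} [Fintype ι] (x : ι → X) : ℝ :=
  ⨆ f : {f : X →L[ℝ] ℝ // ‖f‖ ≤ 1}, ∑ i, |f.1 (x i)|

variable {ι κ : Type*} [Fintype ι] [Fintype κ]

lemma bddAbove_range_sum_abs_apply (x : ι → X) :
    BddAbove (Set.range fun f : {f : X →L[ℝ] ℝ // ‖f‖ ≤ 1} => ∑ i, |f.1 (x i)|) := by
  refine ⟨∑ i, ‖x i‖, ?_⟩
  rintro _ ⟨f, rfl⟩
  refine sum_le_sum fun i _ => ?_
  calc |f.1 (x i)| = ‖f.1 (x i)‖ := (Real.norm_eq_abs _).symm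
    _ ≤ ‖f.1‖ * ‖x i‖ := f.1.le_opNorm _
    _ ≤ ‖x i‖ := mul_le_of_le_one_left (norm_nonneg _) f.2

lemma sum_abs_apply_le_weakL1Norm (x : ι → X) (f : X →L[ℝ] ℝ) (hf : ‖f‖ ≤ 1) :
    ∑ i, |f (x i)| ≤ weakL1Norm x :=
  le_ciSup (bddAbove_range_sum_abs_apply x) ⟨f, hf⟩

lemma norm_sum_sign_le_weakL1Norm (x : ι → X) (ε : ι → Bool) :
    ‖∑ i, (if ε i then x i else -x i)‖ ≤ weakL1Norm x := by
  obtain ⟨f, hf, hfv⟩ := exists_dual_vector'' ℝ (∑ i, (if ε i then x i else -x i))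
  calc ‖∑ i, (if ε i then x i else -x i)‖ = f (∑ i, (if ε i then x i else -x i)) := hfv.symm
    _ ≤ ∑ i, |f (x i)| := by
        rw [map_sum]
        refine sum_le_sum fun i _ => ?_
        cases ε i
        · simpa using neg_le_abs (f (x i))
        · simpa using le_abs_self (f (x i))
    _ ≤ weakL1Norm x := sum_abs_apply_le_weakL1Norm x f hf

lemma weakL1Norm_comp_le {e : κ → ι} (he : Function.Injective e) (x : ι → X) :
    weakL1Norm (x ∘ e) ≤ weakL1Norm x := by
  have : Nonempty {f : X →L[ℝ] ℝ // ‖f‖ ≤ 1} := ⟨⟨0, by simp⟩⟩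
  refine ciSup_le fun f => le_trans ?_ (sum_abs_apply_le_weakL1Norm x f.1 f.2)
  calc ∑ j, |f.1 (x (e j))| = ∑ i ∈ univ.map ⟨e, he⟩, |f.1 (x i)| :=
        (sum_map univ ⟨e, he⟩ fun i => |f.1 (x i)|).symm
    _ ≤ ∑ i, |f.1 (x i)| :=
        sum_le_sum_of_subset_of_nonneg (subset_univ _) fun _ _ _ => abs_nonneg _

end weakL1Norm

lemma succ_mul_le_sum_castLE_of_antitone {n : ℕ} {a : Fin n → ℝ} (ha : Antitone a)
    (k : Fin n) : ((k + 1 : ℕ) : ℝ) * a k ≤ ∑ i : Fin (k + 1), a (Fin.castLE k.isLt i) := by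
  have h := card_nsmul_le_sum univ (fun i : Fin (k + 1) => a (Fin.castLE k.isLt i)) (a k)
    fun i _ => ha (Nat.lt_succ_iff.mp i.isLt)
  simpa using h

theorem stmt5_general {X : Type*} [NormedAddCommGroup X] [NormedSpace ℝ X]
    (g : ℕ → ℝ) (hgpos : ∀ n : ℕ, 1 ≤ n → 0 < g n)
    (c : ℝ) (hc : 0 < c)
    (H : ∀ (n : ℕ) (x : Fin n → X),
      ∑ i, ‖x i‖ ≤ c * ((n : ℝ) / g n) *
        (Finset.univ.sup' Finset.univ_nonempty
          (fun ε : Fin n → Bool => ‖∑ i, (if ε i then x i else -x i)‖))) :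
    ∀ (n : ℕ) (x : Fin n → X) (σ : Equiv.Perm (Fin n)),
      (∀ i j : Fin n, i ≤ j → ‖x (σ j)‖ ≤ ‖x (σ i)‖) →
      ∀ k : Fin n, g (k + 1) * ‖x (σ k)‖ ≤
        c * ⨆ f : {f : X →L[ℝ] ℝ // ‖f‖ ≤ 1}, ∑ i, |f.1 (x i)| := by
  intro n x σ hσ k
  set m := (k : ℕ) + 1
  set e : Fin m → Fin n := σ ∘ Fin.castLE k.isLt
  have he : Function.Injective e := σ.injective.comp (Fin.castLE_injective _)
  have hm : (0 : ℝ) < m := by positivity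
  have hg : 0 < g m := hgpos m le_add_self
  have hsup : univ.sup' univ_nonempty
      (fun ε : Fin m → Bool => ‖∑ i, (if ε i then (x ∘ e) i else -(x ∘ e) i)‖) ≤
        weakL1Norm x :=
    sup'_le _ _ fun ε _ =>
      (norm_sum_sign_le_weakL1Norm (x ∘ e) ε).trans (weakL1Norm_comp_le he x)
  have hmain : (m : ℝ) * ‖x (σ k)‖ ≤ m * (c * weakL1Norm x / g m) :=
    calc (m : ℝ) * ‖x (σ k)‖ ≤ ∑ i, ‖(x ∘ e) i‖ :=
          succ_mul_le_sum_castLE_of_antitone hσ k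
      _ ≤ c * (m / g m) * _ := H m (x ∘ e)
      _ ≤ c * (m / g m) * weakL1Norm x := by gcongr
      _ = m * (c * weakL1Norm x / g m) := by ring
  rw [mul_comm]
  exact (le_div_iff₀ hg).mp (le_of_mul_le_mul_left hmain hm)

/-- If `∑ ‖x_i‖ ≤ c (n / g(n)) sup_{ε=±1} ‖∑ ε_i x_i‖` holds in a normed space `X`,
then for any `x_1, …, x_n` the nonincreasing rearrangement `(a_k^*)` of `(‖x_k‖)`
satisfies `g(k) a_k^* ≤ c · sup_{x* ∈ B_{X*}} ∑ |⟨x*, x_i⟩|` for all `k`. -/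
theorem stmt5 {X : Type*} [NormedAddCommGroup X] [NormedSpace ℝ X]
    (g : ℕ → ℝ) (hgpos : ∀ n : ℕ, 1 ≤ n → 0 < g n)
    (hgmono : ∀ m n : ℕ, 1 ≤ m → m ≤ n → g m ≤ g n)
    (c : ℝ) (hc : 0 < c)
    (H : ∀ (n : ℕ) (x : Fin n → X),
      ∑ i, ‖x i‖ ≤ c * ((n : ℝ) / g n) *
        (Finset.univ.sup' Finset.univ_nonempty
          (fun ε : Fin n → Bool => ‖∑ i, (if ε i then x i else -x i)‖))) :
    ∀ (n : ℕ) (x : Fin n → X) (σ : Equiv.Perm (Fin n)),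
      (∀ i j : Fin n, i ≤ j → ‖x (σ j)‖ ≤ ‖x (σ i)‖) →
      ∀ k : Fin n, g (k + 1) * ‖x (σ k)‖ ≤
        c * ⨆ f : {f : X →L[ℝ] ℝ // ‖f‖ ≤ 1}, ∑ i, |f.1 (x i)| :=
  stmt5_general g hgpos c hc H
end

section
/- Let H be a Hilbert space, X a normed space, and T : H → X a bounded linear operator with a_n(T) > α > 0, where a_n denotes the n-th approximation number. Then there exists an orthonormal family (w_j)_{j=1}^n in H such that ‖T w_j‖ ≥ α for every j = 1,…,n. -/
/-!
Lewis's inductive construction: if `w₀, …, w_{m-1}` (`m < n`) are already chosen and `K` is their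
span, then `T ∘ P_K` has rank at most `m < n`, so `α < ‖T - T ∘ P_K‖ ≤ ‖T|_{Kᗮ}‖`, and `Kᗮ`
contains a unit vector `u` with `α < ‖T u‖`; adjoin `u` to the family.
-/

open Module

namespace ContinuousLinearMap

section ApproxNumber

variable {𝕜 E F : Type*} [NontriviallyNormedField 𝕜]
  [SeminormedAddCommGroup E] [NormedSpace 𝕜 E] [SeminormedAddCommGroup F] [NormedSpace 𝕜 F]

noncomputable def approxNumber (T : E →L[𝕜] F) (n : ℕ) : ℝ :=
  sInf {c : ℝ | ∃ S : E →L[𝕜] F, LinearMap.rank (S : E →ₗ[𝕜] F) < (n : Cardinal) ∧ c = ‖T - S‖}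

theorem approxNumber_le_norm_sub (T : E →L[𝕜] F) {n : ℕ} {S : E →L[𝕜] F}
    (hS : LinearMap.rank (S : E →ₗ[𝕜] F) < n) : T.approxNumber n ≤ ‖T - S‖ :=
  csInf_le ⟨0, by rintro _ ⟨S', -, rfl⟩; positivity⟩ ⟨S, hS, rfl⟩

end ApproxNumber

theorem exists_norm_eq_one_lt_norm_apply {𝕜 E F : Type*} [RCLike 𝕜]
    [NormedAddCommGroup E] [NormedSpace 𝕜 E] [SeminormedAddCommGroup F] [NormedSpace 𝕜 F]
    (A : E →L[𝕜] F) {r : ℝ} (hr₀ : 0 ≤ r) (hr : r < ‖A‖) : ∃ u, ‖u‖ = 1 ∧ r < ‖A u‖ := by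
  obtain ⟨x, hx₁, hAx⟩ := A.exists_lt_apply_of_lt_opNorm hr
  have hx₀ : x ≠ 0 := by
    rintro rfl
    simp only [map_zero, norm_zero] at hAx
    linarith
  refine ⟨(‖x‖⁻¹ : 𝕜) • x, norm_smul_inv_norm hx₀, ?_⟩
  calc r < ‖A x‖ := hAx
    _ ≤ ‖x‖⁻¹ * ‖A x‖ :=
      le_mul_of_one_le_left (norm_nonneg _) ((one_le_inv₀ (norm_pos_iff.2 hx₀)).2 hx₁.le)
    _ = ‖A ((‖x‖⁻¹ : 𝕜) • x)‖ := by
      rw [map_smul, norm_smul, norm_inv, RCLike.norm_ofReal, abs_norm]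

section InnerProductSpace

variable {𝕜 E F : Type*} [RCLike 𝕜] [NormedAddCommGroup E] [InnerProductSpace 𝕜 E]
  [SeminormedAddCommGroup F] [NormedSpace 𝕜 F]

theorem rank_comp_starProjection_le (T : E →L[𝕜] F) (K : Submodule 𝕜 E)
    [FiniteDimensional 𝕜 K] :
    LinearMap.rank (T ∘L K.starProjection : E →ₗ[𝕜] F) ≤ finrank 𝕜 K := by
  have hrange : LinearMap.range (T ∘L K.starProjection : E →ₗ[𝕜] F) ≤ K.map (T : E →ₗ[𝕜] F) := by
    rw [toLinearMap_comp, LinearMap.range_comp]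
    exact Submodule.map_mono (by simp)
  calc LinearMap.rank (T ∘L K.starProjection : E →ₗ[𝕜] F)
      ≤ Module.rank 𝕜 (K.map (T : E →ₗ[𝕜] F)) := Submodule.rank_mono hrange
    _ = finrank 𝕜 (K.map (T : E →ₗ[𝕜] F)) := (finrank_eq_rank _ _).symm
    _ ≤ finrank 𝕜 K := by exact_mod_cast Submodule.finrank_map_le _ K

theorem norm_sub_comp_starProjection_le (T : E →L[𝕜] F) (K : Submodule 𝕜 E)
    [K.HasOrthogonalProjection] : ‖T - T ∘L K.starProjection‖ ≤ ‖T ∘L Kᗮ.subtypeL‖ :=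
  calc ‖T - T ∘L K.starProjection‖ = ‖(T ∘L Kᗮ.subtypeL) ∘L Kᗮ.orthogonalProjectionOnto‖ := by
        change _ = ‖T ∘L Kᗮ.starProjection‖
        rw [K.starProjection_orthogonal, T.comp_sub, T.comp_id]
    _ ≤ ‖T ∘L Kᗮ.subtypeL‖ * ‖Kᗮ.orthogonalProjectionOnto‖ := opNorm_comp_le _ _
    _ ≤ ‖T ∘L Kᗮ.subtypeL‖ :=
      mul_le_of_le_one_right (norm_nonneg _) Kᗮ.orthogonalProjectionOnto_norm_le

theorem exists_unit_orthogonal_lt_norm_apply_of_lt_approxNumber (T : E →L[𝕜] F) {n m : ℕ}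
    (hm : m < n) {α : ℝ} (hα : 0 ≤ α) (hT : α < T.approxNumber n) (w : Fin m → E) :
    ∃ u, ‖u‖ = 1 ∧ (∀ i, inner 𝕜 u (w i) = 0) ∧ α < ‖T u‖ := by
  set K := Submodule.span 𝕜 (Set.range w)
  have : FiniteDimensional 𝕜 K := FiniteDimensional.span_of_finite 𝕜 (Set.finite_range w)
  have hrank : LinearMap.rank (T ∘L K.starProjection : E →ₗ[𝕜] F) < n :=
    (T.rank_comp_starProjection_le K).trans_lt <| by
      exact_mod_cast (finrank_range_le_card w).trans_lt (by simpa using hm)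
  have hnorm : α < ‖T ∘L Kᗮ.subtypeL‖ := hT.trans_le <|
    (T.approxNumber_le_norm_sub hrank).trans (T.norm_sub_comp_starProjection_le K)
  obtain ⟨u, hu, hTu⟩ := (T ∘L Kᗮ.subtypeL).exists_norm_eq_one_lt_norm_apply hα hnorm
  refine ⟨u, hu, fun i => ?_, hTu⟩
  exact Submodule.inner_left_of_mem_orthogonal (Submodule.subset_span (Set.mem_range_self i)) u.2

end InnerProductSpace

end ContinuousLinearMap

theorem stmt11_general {H : Type*} [NormedAddCommGroup H] [InnerProductSpace ℝ H]
    {X : Type*} [NormedAddCommGroup X] [NormedSpace ℝ X]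
    (T : H →L[ℝ] X) (n : ℕ) (α : ℝ) (hα : 0 < α)
    (hT : α < sInf {c : ℝ | ∃ S : H →L[ℝ] X,
      LinearMap.rank (S : H →ₗ[ℝ] X) < (n : Cardinal) ∧ c = ‖T - S‖}) :
    ∃ w : Fin n → H, Orthonormal ℝ w ∧ ∀ j, α ≤ ‖T (w j)‖ := by
  suffices ∀ m ≤ n, ∃ w : Fin m → H, Orthonormal ℝ w ∧ ∀ j, α ≤ ‖T (w j)‖ from this n le_rfl
  intro m
  induction m with
  | zero => exact fun _ => ⟨Fin.elim0, .of_isEmpty _, fun j => j.elim0⟩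
  | succ m ih =>
    intro hm
    obtain ⟨w, hw, hTw⟩ := ih (by omega)
    obtain ⟨u, hu, huw, hTu⟩ :=
      T.exists_unit_orthogonal_lt_norm_apply_of_lt_approxNumber hm hα.le hT w
    exact ⟨Matrix.vecCons u w, orthonormal_vecCons_iff.2 ⟨hu, huw, hw⟩, Fin.cases hTu.le hTw⟩

/-- Lewis's lemma: if `T : H → X` (H Hilbert, X normed) has `n`-th approximation number
`a_n(T) > α > 0`, then there is an orthonormal family `(w_j)_{j=1}^n` in `H` with
`‖T w_j‖ ≥ α` for every `j`. -/
theorem stmt11 {H : Type*} [NormedAddCommGroup H] [InnerProductSpace ℝ H] [CompleteSpace H]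
    {X : Type*} [NormedAddCommGroup X] [NormedSpace ℝ X]
    (T : H →L[ℝ] X) (n : ℕ) (α : ℝ) (hα : 0 < α)
    (hT : α < sInf {c : ℝ | ∃ S : H →L[ℝ] X,
      LinearMap.rank (S : H →ₗ[ℝ] X) < (n : Cardinal) ∧ c = ‖T - S‖}) :
    ∃ w : Fin n → H, Orthonormal ℝ w ∧ ∀ j, α ≤ ‖T (w j)‖ :=
  stmt11_general T n α hα hT
end

section
/- Let X, Y be normed spaces and T : X → Y linear and bounded. Suppose x₁,…,x_n ∈ X and ρ ∈ (0,1] satisfy sup_{y*∈B_{Y*}} ∑_{j=1}^n |⟨y*, T x_j⟩|² ≤ 1 and ‖T x_j‖ ≥ ρ for each j. Let u := ∑_j e_j ⊗ x_j : ℓ₂^n → X and, for norming functionals y_j* with ⟨y_j*, Tx_j⟩ = ‖Tx_j‖, let v := ∑_j y_j* ⊗ e_j : Y → ℓ_∞^n. Then ‖v‖ ≤ 1, ‖T u‖ ≤ 1, and π₂(v T u) ≥ ρ √n, where π₂ is the 2-summing norm. -/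
/-!
`‖Tu‖ ≤ 1` is Cauchy–Schwarz against a norming functional of `Tu a`. For the lower bound, the
unit vector basis of `ℓ₂ⁿ` is a weak-`ℓ₂` unit family (`∑ f(e_k)² = ‖f‖²`), and the `j`-th
coordinate of `vTu e_j` is `‖T x_j‖ ≥ ρ`.
-/

theorem norm_sum_smul_le_of_weakly_bounded {ι E : Type*} [Fintype ι]
    [NormedAddCommGroup E] [NormedSpace ℝ E] (z : ι → E)
    (hz : ∀ f : E →L[ℝ] ℝ, ‖f‖ ≤ 1 → ∑ j, f (z j) ^ 2 ≤ 1) (a : EuclideanSpace ℝ ι) :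
    ‖∑ j, a j • z j‖ ≤ ‖a‖ := by
  obtain ⟨g, hg, hgz⟩ := exists_dual_vector'' ℝ (∑ j, a j • z j)
  have hnorm_a : √(∑ j, a j ^ 2) = ‖a‖ := by
    simp only [EuclideanSpace.norm_eq, Real.norm_eq_abs, sq_abs]
  calc ‖∑ j, a j • z j‖ = ∑ j, a j * g (z j) := by simpa using hgz.symm
    _ ≤ √(∑ j, a j ^ 2) * √(∑ j, g (z j) ^ 2) := Real.sum_mul_le_sqrt_mul_sqrt _ _ _
    _ ≤ ‖a‖ * 1 := by
      rw [hnorm_a]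
      gcongr
      exact Real.sqrt_le_one.mpr (hz g hg)
    _ = ‖a‖ := mul_one _

theorem EuclideanSpace.sum_sq_apply_single_le_one {ι : Type*} [Fintype ι] [DecidableEq ι]
    (f : EuclideanSpace ℝ ι →L[ℝ] ℝ) (hf : ‖f‖ ≤ 1) :
    ∑ k, f (EuclideanSpace.single k 1) ^ 2 ≤ 1 := by
  have h := (EuclideanSpace.basisFun ι ℝ).norm_dual f
  simp only [EuclideanSpace.basisFun_apply] at h
  rw [← h]
  nlinarith [norm_nonneg f]

theorem mul_sqrt_card_le_sqrt_sum_sq {ι : Type*} [Fintype ι] {ρ : ℝ} (hρ : 0 ≤ ρ)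
    (b : ι → ℝ) (hb : ∀ i, ρ ≤ b i) :
    ρ * √(Fintype.card ι) ≤ √(∑ i, b i ^ 2) := by
  rw [← Real.sqrt_sq hρ, ← Real.sqrt_mul (sq_nonneg ρ)]
  gcongr
  calc ρ ^ 2 * Fintype.card ι = ∑ _i : ι, ρ ^ 2 := by simp [mul_comm]
    _ ≤ ∑ i, b i ^ 2 := Finset.sum_le_sum fun i _ => pow_le_pow_left₀ hρ (hb i) 2

theorem stmt16_general {X Y : Type*} [NormedAddCommGroup X] [NormedSpace ℝ X]
    [NormedAddCommGroup Y] [NormedSpace ℝ Y]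
    (T : X →L[ℝ] Y) (n : ℕ) (x : Fin n → X) (ρ : ℝ)
    (hρ0 : 0 < ρ)
    (hweak : ∀ f : Y →L[ℝ] ℝ, ‖f‖ ≤ 1 → ∑ j, (f (T (x j))) ^ 2 ≤ 1)
    (hbelow : ∀ j, ρ ≤ ‖T (x j)‖)
    (y : Fin n → (Y →L[ℝ] ℝ)) (hy : ∀ j, ‖y j‖ ≤ 1)
    (hynorm : ∀ j, y j (T (x j)) = ‖T (x j)‖)
    (u : EuclideanSpace ℝ (Fin n) →L[ℝ] X)
    (hu : ∀ a : EuclideanSpace ℝ (Fin n), u a = ∑ j, a j • x j)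
    (v : Y →L[ℝ] (Fin n → ℝ))
    (hv : ∀ (w : Y) (j : Fin n), v w j = y j w) :
    ‖v‖ ≤ 1 ∧ ‖T.comp u‖ ≤ 1 ∧
    (∀ c : ℝ,
      (∀ (m : ℕ) (a : Fin m → EuclideanSpace ℝ (Fin n)),
        (∀ f : EuclideanSpace ℝ (Fin n) →L[ℝ] ℝ, ‖f‖ ≤ 1 → ∑ k, (f (a k)) ^ 2 ≤ 1) →
        Real.sqrt (∑ k, ‖(v.comp (T.comp u)) (a k)‖ ^ 2) ≤ c) →
      ρ * Real.sqrt n ≤ c) := by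
  have hv_pi : v = ContinuousLinearMap.pi y := by ext w j; simp [hv]
  refine ⟨hv_pi ▸ ContinuousLinearMap.norm_pi_le_of_le hy zero_le_one,
    ContinuousLinearMap.opNorm_le_bound _ zero_le_one fun a => ?_, fun c hc => ?_⟩
  · simpa [hu] using norm_sum_smul_le_of_weakly_bounded (T ∘ x) hweak a
  · have hu_single (j : Fin n) : u (EuclideanSpace.single j 1) = x j := by
      simp [hu]
    have hdiag (j : Fin n) : ρ ≤ ‖(v.comp (T.comp u)) (EuclideanSpace.single j 1)‖ :=
      calc ρ ≤ ‖T (x j)‖ := hbelow j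
        _ ≤ ‖v (T (x j)) j‖ := by rw [hv, hynorm, Real.norm_of_nonneg (norm_nonneg _)]
        _ ≤ ‖v (T (x j))‖ := norm_le_pi_norm _ j
        _ = _ := by simp [hu_single]
    calc ρ * √n = ρ * √(Fintype.card (Fin n)) := by rw [Fintype.card_fin]
      _ ≤ _ := mul_sqrt_card_le_sqrt_sum_sq hρ0.le _ hdiag
      _ ≤ c := hc n _ EuclideanSpace.sum_sq_apply_single_le_one

/-- Setup for Proposition 1.3: if `sup_{y*∈B_{Y*}} ∑_j ⟨y*,Tx_j⟩² ≤ 1` and `‖Tx_j‖ ≥ ρ`,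
then with `u = ∑ e_j ⊗ x_j : ℓ₂ⁿ → X` and `v = ∑ y_j* ⊗ e_j : Y → ℓ_∞ⁿ` (built from
norming functionals `y_j*`), one has `‖v‖ ≤ 1`, `‖Tu‖ ≤ 1`, and `π₂(vTu) ≥ ρ√n`.
The 2-summing lower bound is expressed as: every upper bound `c` for the quantities
`(∑_k ‖vTu a_k‖²)^{1/2}` over weak-`ℓ₂` unit families `(a_k)` satisfies `ρ√n ≤ c`. -/
theorem stmt16 {X Y : Type*} [NormedAddCommGroup X] [NormedSpace ℝ X]
    [NormedAddCommGroup Y] [NormedSpace ℝ Y]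
    (T : X →L[ℝ] Y) (n : ℕ) (hn : 1 ≤ n) (x : Fin n → X) (ρ : ℝ)
    (hρ0 : 0 < ρ) (hρ1 : ρ ≤ 1)
    (hweak : ∀ f : Y →L[ℝ] ℝ, ‖f‖ ≤ 1 → ∑ j, (f (T (x j))) ^ 2 ≤ 1)
    (hbelow : ∀ j, ρ ≤ ‖T (x j)‖)
    (y : Fin n → (Y →L[ℝ] ℝ)) (hy : ∀ j, ‖y j‖ ≤ 1)
    (hynorm : ∀ j, y j (T (x j)) = ‖T (x j)‖)
    (u : EuclideanSpace ℝ (Fin n) →L[ℝ] X)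
    (hu : ∀ a : EuclideanSpace ℝ (Fin n), u a = ∑ j, a j • x j)
    (v : Y →L[ℝ] (Fin n → ℝ))
    (hv : ∀ (w : Y) (j : Fin n), v w j = y j w) :
    ‖v‖ ≤ 1 ∧ ‖T.comp u‖ ≤ 1 ∧
    (∀ c : ℝ,
      (∀ (m : ℕ) (a : Fin m → EuclideanSpace ℝ (Fin n)),
        (∀ f : EuclideanSpace ℝ (Fin n) →L[ℝ] ℝ, ‖f‖ ≤ 1 → ∑ k, (f (a k)) ^ 2 ≤ 1) →
        Real.sqrt (∑ k, ‖(v.comp (T.comp u)) (a k)‖ ^ 2) ≤ c) →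
      ρ * Real.sqrt n ≤ c) :=
  stmt16_general T n x ρ hρ0 hweak hbelow y hy hynorm u hu v hv
end

section
/- Let H be a Hilbert space, X a normed space, v : X → H a 2-summing operator, and m ≥ 1. Then the m-th Weyl number satisfies x_m(v) ≤ m^{−1/2} π₂(v). -/
/-! If `c < a_m(w)`, then for every subspace `K` of dimension `< m` the operator `w ∘ P_K` has rank
`< m`, so `‖w - w ∘ P_K‖ > c` and `w` exceeds `c` on some unit vector orthogonal to `K`. Choosing
these vectors greedily gives an orthonormal family `e₁, …, e_m` with `m c² < ∑ ‖w e_k‖²`. For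
`w = v u` with `‖u‖ ≤ 1` the family `u e_k` is weakly `ℓ₂`-bounded by `1`, so the `2`-summing
bound caps that sum by `C²`. -/

open Submodule

theorem exists_mem_norm_eq_one_lt_norm_apply {E F : Type*} [NormedAddCommGroup E]
    [NormedSpace ℝ E] [NormedAddCommGroup F] [NormedSpace ℝ F] {w : E →L[ℝ] F}
    {K : Submodule ℝ E} {c : ℝ} {x : E} (hxK : x ∈ K) (hx : c * ‖x‖ < ‖w x‖) :
    ∃ y ∈ K, ‖y‖ = 1 ∧ c < ‖w y‖ := by
  have hx0 : 0 < ‖x‖ := norm_pos_iff.mpr fun h => by simp [h] at hx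
  refine ⟨‖x‖⁻¹ • x, K.smul_mem _ hxK, by simp [norm_smul, hx0.ne'], ?_⟩
  rw [map_smul, norm_smul, norm_inv, norm_norm, ← div_eq_inv_mul, lt_div_iff₀ hx0]
  exact hx

section

variable {G : Type*} [NormedAddCommGroup G] [InnerProductSpace ℝ G]
  {H : Type*} [NormedAddCommGroup H] [NormedSpace ℝ H]

theorem Orthonormal.sum_sq_apply_le_sq_norm {ι : Type*} [Fintype ι] {e : ι → G}
    (he : Orthonormal ℝ e) (f : G →L[ℝ] ℝ) : ∑ i, f (e i) ^ 2 ≤ ‖f‖ ^ 2 := by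
  set s := ∑ i, f (e i) ^ 2
  -- test `f` against `g := ∑ f (e i) • e i`, for which `f g = ‖g‖² = s`
  set g := ∑ i, f (e i) • e i
  have hg : ‖g‖ ^ 2 = s := by
    rw [← real_inner_self_eq_norm_sq, he.inner_sum]
    simp [s, sq]
  have hfg : f g = s := by simp [g, s, sq]
  have hs : 0 ≤ s := by positivity
  have : s ≤ ‖f‖ * ‖g‖ := hfg ▸ (le_abs_self _).trans (f.le_opNorm g)
  nlinarith [norm_nonneg f, norm_nonneg g]

/-- The `m`-th approximation number `a_m(w)`. -/
noncomputable def approxNumber (m : ℕ) (w : G →L[ℝ] H) : ℝ :=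
  sInf {c : ℝ | ∃ S : G →L[ℝ] H, LinearMap.rank (S : G →ₗ[ℝ] H) < (m : Cardinal) ∧ c = ‖w - S‖}

theorem approxNumber_le_norm_sub {m : ℕ} (w S : G →L[ℝ] H)
    (hS : LinearMap.rank (S : G →ₗ[ℝ] H) < m) : approxNumber m w ≤ ‖w - S‖ :=
  csInf_le ⟨0, by rintro _ ⟨T, -, rfl⟩; exact norm_nonneg _⟩ ⟨S, hS, rfl⟩

theorem rank_comp_starProjection_le (w : G →L[ℝ] H) (K : Submodule ℝ G)
    [FiniteDimensional ℝ K] :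
    LinearMap.rank (w.comp K.starProjection : G →ₗ[ℝ] H) ≤ Module.finrank ℝ K := by
  have hrange :
      LinearMap.range (w.comp K.starProjection : G →ₗ[ℝ] H) = K.map (w : G →ₗ[ℝ] H) := by
    rw [ContinuousLinearMap.toLinearMap_comp, LinearMap.range_comp, range_starProjection]
  have h := lift_rank_map_le (w : G →ₗ[ℝ] H) K
  rw [← Module.finrank_eq_rank ℝ K, Cardinal.lift_natCast, Cardinal.lift_le_nat_iff] at h
  rwa [LinearMap.rank, hrange]

theorem norm_sub_comp_starProjection_le (w : G →L[ℝ] H) (K : Submodule ℝ G)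
    [K.HasOrthogonalProjection] {c : ℝ} (hc : 0 ≤ c) (h : ∀ x ∈ Kᗮ, ‖w x‖ ≤ c * ‖x‖) :
    ‖w - w.comp K.starProjection‖ ≤ c := by
  refine ContinuousLinearMap.opNorm_le_bound _ hc fun x => ?_
  calc ‖(w - w.comp K.starProjection) x‖ = ‖w (Kᗮ.starProjection x)‖ := by
        rw [starProjection_orthogonal_val, map_sub]; rfl
    _ ≤ c * ‖Kᗮ.starProjection x‖ := h _ (Kᗮ.starProjection_apply_mem x)
    _ ≤ c * ‖x‖ := by gcongr; exact Kᗮ.norm_starProjection_apply_le x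

theorem exists_mem_orthogonal_lt_norm_apply {m : ℕ} {w : G →L[ℝ] H} {c : ℝ} (hc : 0 ≤ c)
    (hw : c < approxNumber m w) (K : Submodule ℝ G) [FiniteDimensional ℝ K]
    (hK : Module.finrank ℝ K < m) : ∃ y ∈ Kᗮ, ‖y‖ = 1 ∧ c < ‖w y‖ := by
  by_contra! h
  have hle : ∀ x ∈ Kᗮ, ‖w x‖ ≤ c * ‖x‖ := fun x hx =>
    not_lt.mp fun hlt => by
      obtain ⟨y, hy, hy1, hwy⟩ := exists_mem_norm_eq_one_lt_norm_apply hx hlt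
      exact (h y hy hy1).not_gt hwy
  have hrank : LinearMap.rank (w.comp K.starProjection : G →ₗ[ℝ] H) < m :=
    (rank_comp_starProjection_le w K).trans_lt (by exact_mod_cast hK)
  have := (approxNumber_le_norm_sub w _ hrank).trans (norm_sub_comp_starProjection_le w K hc hle)
  linarith

theorem exists_orthonormal_lt_norm_apply {m : ℕ} {w : G →L[ℝ] H} {c : ℝ} (hc : 0 ≤ c)
    (hw : c < approxNumber m w) :
    ∀ j ≤ m, ∃ e : Fin j → G, Orthonormal ℝ e ∧ ∀ k, c < ‖w (e k)‖
  | 0, _ => ⟨Fin.elim0, .of_isEmpty _, fun k => k.elim0⟩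
  | j + 1, hj => by
    obtain ⟨e, he, hwe⟩ := exists_orthonormal_lt_norm_apply hc hw j (j.le_succ.trans hj)
    have := FiniteDimensional.span_of_finite ℝ (Set.finite_range e)
    obtain ⟨y, hyK, hy1, hwy⟩ := exists_mem_orthogonal_lt_norm_apply hc hw (span ℝ (Set.range e))
      ((finrank_range_le_card e).trans_lt (by simpa using hj))
    refine ⟨Matrix.vecCons y e, orthonormal_vecCons_iff.mpr ⟨hy1, fun k => ?_, he⟩,
      Fin.forall_fin_succ.mpr ⟨hwy, hwe⟩⟩
    exact (mem_orthogonal' _ y).mp hyK _ (subset_span ⟨k, rfl⟩)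

theorem approxNumber_le_of_sum_sq_norm_apply_le {m : ℕ} (hm : 1 ≤ m) {w : G →L[ℝ] H}
    {B : ℝ} (hB : 0 ≤ B)
    (h : ∀ e : Fin m → G, Orthonormal ℝ e → ∑ k, ‖w (e k)‖ ^ 2 ≤ B ^ 2) :
    approxNumber m w ≤ B / Real.sqrt m := by
  set c := B / Real.sqrt m
  have hc : 0 ≤ c := by positivity
  have hmc : m * c ^ 2 = B ^ 2 := by
    rw [div_pow, Real.sq_sqrt m.cast_nonneg]
    field_simp
  by_contra! hw
  obtain ⟨e, he, hwe⟩ := exists_orthonormal_lt_norm_apply hc hw m le_rfl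
  have hsum : ∑ _k : Fin m, c ^ 2 < ∑ k, ‖w (e k)‖ ^ 2 :=
    Finset.sum_lt_sum_of_nonempty (Finset.univ_nonempty_iff.mpr ⟨⟨0, hm⟩⟩)
      fun k _ => pow_lt_pow_left₀ (hwe k) hc two_ne_zero
  simp only [Finset.sum_const, Finset.card_univ, Fintype.card_fin, nsmul_eq_mul] at hsum
  linarith [h e he]

end

theorem stmt17_general {X : Type*} [NormedAddCommGroup X] [NormedSpace ℝ X]
    {H : Type*} [NormedAddCommGroup H] [InnerProductSpace ℝ H]
    (v : X →L[ℝ] H) (C : ℝ) (hC : 0 ≤ C)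
    (h2sum : ∀ (N : ℕ) (a : Fin N → X),
      (∀ f : X →L[ℝ] ℝ, ‖f‖ ≤ 1 → ∑ k, (f (a k)) ^ 2 ≤ 1) →
      ∑ k, ‖v (a k)‖ ^ 2 ≤ C ^ 2)
    (m : ℕ) (hm : 1 ≤ m) :
    ∀ (G : Type*) [NormedAddCommGroup G] [InnerProductSpace ℝ G] [CompleteSpace G],
      ∀ u : G →L[ℝ] X, ‖u‖ ≤ 1 →
        sInf {c : ℝ | ∃ S : G →L[ℝ] H,
            LinearMap.rank (S : G →ₗ[ℝ] H) < (m : Cardinal) ∧ c = ‖v.comp u - S‖} ≤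
          C / Real.sqrt m := by
  intro G _ _ _ u hu
  refine approxNumber_le_of_sum_sq_norm_apply_le hm hC fun e he =>
    h2sum m (fun k => u (e k)) fun f hf => ?_
  have hfu : ‖f.comp u‖ ≤ 1 := (f.opNorm_comp_le u).trans (mul_le_one₀ hf (norm_nonneg u) hu)
  calc ∑ k, f (u (e k)) ^ 2 ≤ ‖f.comp u‖ ^ 2 := he.sum_sq_apply_le_sq_norm (f.comp u)
    _ ≤ 1 := pow_le_one₀ (norm_nonneg _) hfu

/-- Weyl number estimate for 2-summing operators into a Hilbert space:
if `v : X → H` is 2-summing with constant `C` (i.e. `∑ ‖v a_k‖² ≤ C²` for every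
weak-`ℓ₂` unit family `(a_k)` in `X`), then for every `m ≥ 1` the `m`-th Weyl number
satisfies `x_m(v) ≤ m^{-1/2} C`: for every Hilbert space `G` and every `u : G → X`
with `‖u‖ ≤ 1`, the `m`-th approximation number of `v ∘ u` is at most `C/√m`. -/
theorem stmt17 {X : Type*} [NormedAddCommGroup X] [NormedSpace ℝ X]
    {H : Type*} [NormedAddCommGroup H] [InnerProductSpace ℝ H] [CompleteSpace H]
    (v : X →L[ℝ] H) (C : ℝ) (hC : 0 ≤ C)
    (h2sum : ∀ (N : ℕ) (a : Fin N → X),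
      (∀ f : X →L[ℝ] ℝ, ‖f‖ ≤ 1 → ∑ k, (f (a k)) ^ 2 ≤ 1) →
      ∑ k, ‖v (a k)‖ ^ 2 ≤ C ^ 2)
    (m : ℕ) (hm : 1 ≤ m) :
    ∀ (G : Type*) [NormedAddCommGroup G] [InnerProductSpace ℝ G] [CompleteSpace G],
      ∀ u : G →L[ℝ] X, ‖u‖ ≤ 1 →
        sInf {c : ℝ | ∃ S : G →L[ℝ] H,
            LinearMap.rank (S : G →ₗ[ℝ] H) < (m : Cardinal) ∧ c = ‖v.comp u - S‖} ≤
          C / Real.sqrt m :=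
  stmt17_general v C hC h2sum m hm
end

section
/- Let X be a finite-dimensional normed space of dimension n. Then the absolutely 1-summing norm of the identity satisfies π₁(id_X) ≤ n, i.e., for all finite families (x_k) in X one has ∑_k ‖x_k‖ ≤ n · sup_{x* ∈ B_{X*}} ∑_k |⟨x*, x_k⟩|. -/
/-!
Choose an Auerbach basis: a basis `b` of `X` with `‖b i‖ ≤ 1` whose coordinate functionals
`b*_i` also have norm `≤ 1`. It exists because a family in the unit ball maximising
`|det|` is a basis, and by Cramer's rule each coordinate `b*_i x` is the ratio
`det(b with b i replaced by x) / det b`, of absolute value at most `‖x‖`. Then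
`‖x‖ ≤ ∑ i, |b*_i x|` for every `x`, and summing over the family `x_k` and exchanging the sums
bounds `∑ k, ‖x_k‖` by `n` sums `∑ k, |b*_i x_k|`, each at most the supremum.
-/

open Module Metric Finset

namespace Module.Basis

variable {ι X : Type*} [Fintype ι] [DecidableEq ι] [NormedAddCommGroup X] [NormedSpace ℝ X]

theorem continuous_det (e : Basis ι ℝ X) : Continuous (e.det : (ι → X) → ℝ) := by
  have : FiniteDimensional ℝ X := Module.Finite.of_basis e
  have hcoord (i : ι) : Continuous (e.coord i) := (e.coord i).continuous_of_finiteDimensional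
  simp_rw [funext e.det_apply]
  exact (continuous_matrix fun i j => (hcoord i).comp (continuous_apply j)).matrix_det

theorem det_inv_norm_smul_ne_zero (e : Basis ι ℝ X) : e.det (fun i => ‖e i‖⁻¹ • e i) ≠ 0 := by
  rw [e.det.map_smul_univ, e.det_self, smul_eq_mul, mul_one]
  exact prod_ne_zero_iff.2 fun i _ => inv_ne_zero (norm_ne_zero_iff.2 (e.ne_zero i))

theorem exists_auerbach_basis [FiniteDimensional ℝ X] (e : Basis ι ℝ X) :
    ∃ b : Basis ι ℝ X, (∀ i, ‖b i‖ ≤ 1) ∧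
      ∀ i, ‖LinearMap.toContinuousLinearMap (b.coord i)‖ ≤ 1 := by
  set S : Set (ι → X) := Set.univ.pi fun _ => closedBall 0 1
  have hS : IsCompact S := isCompact_univ_pi fun _ => isCompact_closedBall 0 1
  have hv₀ : (fun i => ‖e i‖⁻¹ • e i) ∈ S := fun i _ => by
    rw [mem_closedBall_zero_iff, _root_.norm_smul, norm_inv, norm_norm,
      inv_mul_cancel₀ (norm_ne_zero_iff.2 (e.ne_zero i))]
  obtain ⟨b, hbS, hbmax⟩ := hS.exists_isMaxOn ⟨_, hv₀⟩ e.continuous_det.abs.continuousOn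
  have hdet : e.det b ≠ 0 :=
    abs_pos.1 ((abs_pos.2 e.det_inv_norm_smul_ne_zero).trans_le (hbmax hv₀))
  obtain ⟨hli, hsp⟩ := e.is_basis_iff_det.2 (isUnit_iff_ne_zero.2 hdet)
  refine ⟨Basis.mk hli hsp.ge, fun i => by simpa using hbS i trivial, fun i => ?_⟩
  refine (ContinuousLinearMap.opNorm_bound_of_ball_bound one_pos 1 _ fun y hy => ?_).trans_eq
    (div_one 1)
  have hcramer : e.det b * (Basis.mk hli hsp.ge).coord i y = e.det (Function.update b i y) :=
    congrArg (· y) (e.det_smul_mk_coord_eq_det_update hli hsp.ge i)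
  have hupdate : Function.update b i y ∈ S := fun j _ => by
    rcases eq_or_ne j i with rfl | hj
    · simpa using hy
    · simpa [hj] using hbS j trivial
  have hle : |e.det b| * |(Basis.mk hli hsp.ge).coord i y| ≤ |e.det b| * 1 := by
    rw [← abs_mul, hcramer, mul_one]
    exact hbmax hupdate
  simpa using le_of_mul_le_mul_left hle (abs_pos.2 hdet)

end Module.Basis

theorem Module.Basis.norm_le_sum_norm_coord {𝕜 ι E : Type*} [NormedField 𝕜] [Fintype ι]
    [SeminormedAddCommGroup E] [NormedSpace 𝕜 E] (b : Basis ι 𝕜 E) (hb : ∀ i, ‖b i‖ ≤ 1)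
    (x : E) : ‖x‖ ≤ ∑ i, ‖b.coord i x‖ :=
  calc ‖x‖ = ‖∑ i, b.coord i x • b i‖ := by simp [b.sum_repr]
    _ ≤ ∑ i, ‖b.coord i x • b i‖ := norm_sum_le _ _
    _ ≤ ∑ i, ‖b.coord i x‖ := sum_le_sum fun i _ => by
      rw [_root_.norm_smul]; exact mul_le_of_le_one_right (norm_nonneg _) (hb i)

theorem bddAbove_range_sum_abs_of_norm_le_one {X : Type*} [SeminormedAddCommGroup X]
    [NormedSpace ℝ X] {m : ℕ} (x : Fin m → X) :
    BddAbove (Set.range fun f : {f : X →L[ℝ] ℝ // ‖f‖ ≤ 1} => ∑ k, |f.1 (x k)|) := by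
  refine ⟨∑ k, ‖x k‖, ?_⟩
  rintro _ ⟨f, rfl⟩
  exact sum_le_sum fun k _ => (f.1.le_opNorm _).trans (mul_le_of_le_one_left (norm_nonneg _) f.2)

theorem sum_norm_le_card_mul_iSup_sum_abs {ι X : Type*} [Fintype ι] [SeminormedAddCommGroup X]
    [NormedSpace ℝ X] (c : ι → X →L[ℝ] ℝ) (hc : ∀ i, ‖c i‖ ≤ 1)
    (hnorm : ∀ x, ‖x‖ ≤ ∑ i, |c i x|) {m : ℕ} (x : Fin m → X) :
    ∑ k, ‖x k‖ ≤ Fintype.card ι * ⨆ f : {f : X →L[ℝ] ℝ // ‖f‖ ≤ 1}, ∑ k, |f.1 (x k)| :=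
  calc ∑ k, ‖x k‖ ≤ ∑ k, ∑ i, |c i (x k)| := sum_le_sum fun k _ => hnorm (x k)
    _ = ∑ i, ∑ k, |c i (x k)| := sum_comm
    _ ≤ ∑ _i : ι, ⨆ f : {f : X →L[ℝ] ℝ // ‖f‖ ≤ 1}, ∑ k, |f.1 (x k)| :=
      sum_le_sum fun i _ => le_ciSup (bddAbove_range_sum_abs_of_norm_le_one x) ⟨c i, hc i⟩
    _ = _ := by rw [sum_const, card_univ, nsmul_eq_mul]

/-- For an `n`-dimensional normed space `X`, the 1-summing norm of the identity is at
most `n`: for every finite family `(x_k)` in `X`,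
`∑_k ‖x_k‖ ≤ n · sup_{x* ∈ B_{X*}} ∑_k |⟨x*, x_k⟩|`. -/
theorem stmt19 {X : Type*} [NormedAddCommGroup X] [NormedSpace ℝ X]
    [FiniteDimensional ℝ X] (n : ℕ) (hdim : Module.finrank ℝ X = n) :
    ∀ (m : ℕ) (x : Fin m → X),
      ∑ k, ‖x k‖ ≤ (n : ℝ) * ⨆ f : {f : X →L[ℝ] ℝ // ‖f‖ ≤ 1}, ∑ k, |f.1 (x k)| := by
  intro m x
  obtain ⟨b, hb, hcoord⟩ := (Module.finBasisOfFinrankEq ℝ X hdim).exists_auerbach_basis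
  simpa using sum_norm_le_card_mul_iSup_sum_abs _ hcoord
    (fun y => by simpa using b.norm_le_sum_norm_coord hb y) x
end
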